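/- Let $G$ be a connected weighted graph, and $C, D \subseteq V(G)$ disjoint nonempty sets. Let $I := \mathtt{Schur}(G, C \cup D)$ and let $G/(C,D)$ be the graph obtained by contracting $C$ to a single vertex $c$ and $D$ to a single vertex $d$. Then $c^I(C, D) = \frac{1}{\chi_{cd}^T L_{G/(C,D)}^{\dagger} \chi_{cd}}$, i.e., the total weight of edges between $C$ and $D$ in the Schur complement equals the reciprocal of the effective resistance between the contracted vertices $c$ and $d$. -/

import Mathlib

/-!
Let `x = M χ` be the potential on `G/(C,D)`. Since `χ` is orthogonal to the constants, which span
the kernel of the contracted Laplacian, `x` solves `L_{G/(C,D)} x = χ`. Its pullback `y` to `G` is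
constant on `C` and on `D`, harmonic off `C ∪ D`, and sends a unit current out of `C`.
Eliminating the harmonic vertices replaces `L` by its Schur complement `I` on `C ∪ D`, and as `I`
has zero row sums, the current out of `C` under a potential taking the values `x_c` on `C` and
`x_d` on `D` is `(x_c - x_d) · c^I(C, D)`. Hence `c^I(C, D) · χᵀ x = 1`.
-/

open Matrix MeasureTheory
open scoped Classical

/-- The (weighted) Laplacian matrix of the weighted graph on `V` with weights `c`. -/
noncomputable def lapl {V : Type*} [Fintype V] [DecidableEq V] (c : V → V → ℝ) :
    Matrix V V ℝ :=
  fun u v => if u = v then ∑ w, c u w else -c u v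

/-- The graph described by `L` is connected: the kernel of `L` consists of constants. -/
def LapConnected {V : Type*} [Fintype V] (L : Matrix V V ℝ) : Prop :=
  ∀ x : V → ℝ, L *ᵥ x = 0 → ∃ k : ℝ, ∀ v, x v = k

/-- The Schur complement of `L` onto the rows and columns indexed by `S`,
eliminating the vertices outside of `S`. -/
noncomputable def schur {V : Type*} [Fintype V] [DecidableEq V]
    (L : Matrix V V ℝ) (S : Set V) : Matrix S S ℝ :=
  (Matrix.of fun i j : S => L i.1 j.1)
    - (Matrix.of fun (i : S) (j : {v : V // v ∉ S}) => L i.1 j.1)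
        * (Matrix.of fun i j : {v : V // v ∉ S} => L i.1 j.1)⁻¹
        * (Matrix.of fun (i : {v : V // v ∉ S}) (j : S) => L i.1 j.1)

/-- `B` is the Moore–Penrose pseudoinverse of `A`. -/
def IsMPInv {n : Type*} [Fintype n] (A B : Matrix n n ℝ) : Prop :=
  A * B * A = A ∧ B * A * B = B ∧ (A * B)ᵀ = A * B ∧ (B * A)ᵀ = B * A

/-- The vertex map contracting `C` to the vertex `Sum.inr false` and `D` to the vertex
`Sum.inr true`, leaving all other vertices untouched. -/
noncomputable def contractMap {V : Type*} (C D : Set V) (v : V) :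
    ({v : V // v ∉ C ∪ D}) ⊕ Bool :=
  if hC : v ∈ C then Sum.inr false
  else if hD : v ∈ D then Sum.inr true
  else Sum.inl ⟨v, by simp [Set.mem_union, hC, hD]⟩

/-- The Laplacian of the graph `G/(C,D)` obtained by contracting `C` to a single
vertex and `D` to a single vertex: `L_{G/(C,D)} = F L Fᵀ` where `F` is the 0/1
matrix of the contraction map. -/
noncomputable def contractLapl {V : Type*} [Fintype V] [DecidableEq V]
    (c : V → V → ℝ) (C D : Set V) :
    Matrix (({v : V // v ∉ C ∪ D}) ⊕ Bool) (({v : V // v ∉ C ∪ D}) ⊕ Bool) ℝ :=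
  (Matrix.of fun a u => if contractMap C D u = a then (1 : ℝ) else 0) * lapl c *
    (Matrix.of fun a u => if contractMap C D u = a then (1 : ℝ) else 0)ᵀ

section Laplacian

variable {V : Type*} [Fintype V] [DecidableEq V] {c : V → V → ℝ}

theorem lapl_transpose (hsymm : ∀ u v, c u v = c v u) : (lapl c)ᵀ = lapl c := by
  ext u v
  by_cases h : u = v
  · subst h; rfl
  · simp [lapl, h, Ne.symm h, hsymm v u]

theorem lapl_apply_eq_ite_sub (hdiag : ∀ v, c v v = 0) (u v : V) :
    lapl c u v = (if u = v then ∑ w, c u w else 0) - c u v := by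
  by_cases h : u = v
  · subst h; simp [lapl, hdiag]
  · simp [lapl, h]

theorem lapl_mulVec_apply (hdiag : ∀ v, c v v = 0) (x : V → ℝ) (u : V) :
    (lapl c *ᵥ x) u = ∑ v, c u v * (x u - x v) := by
  simp [mulVec, dotProduct, lapl_apply_eq_ite_sub hdiag, sub_mul, ite_mul, Finset.sum_mul, mul_sub]

theorem lapl_mulVec_const (hdiag : ∀ v, c v v = 0) (k : ℝ) : lapl c *ᵥ (fun _ => k) = 0 := by
  ext u; simp [lapl_mulVec_apply hdiag]

theorem two_mul_dotProduct_lapl_mulVec (hsymm : ∀ u v, c u v = c v u) (hdiag : ∀ v, c v v = 0)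
    (x : V → ℝ) : 2 * (x ⬝ᵥ (lapl c *ᵥ x)) = ∑ u, ∑ v, c u v * (x u - x v) ^ 2 := by
  have hswap : ∑ u, ∑ v, c u v * (x u - x v) * x v = -∑ u, ∑ v, c u v * (x u - x v) * x u := by
    rw [Finset.sum_comm, ← Finset.sum_neg_distrib]
    refine Finset.sum_congr rfl fun u _ => ?_
    rw [← Finset.sum_neg_distrib]
    exact Finset.sum_congr rfl fun v _ => by rw [hsymm]; ring
  have hsq : ∑ u, ∑ v, c u v * (x u - x v) ^ 2
      = ∑ u, ∑ v, c u v * (x u - x v) * x u - ∑ u, ∑ v, c u v * (x u - x v) * x v := by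
    simp only [← Finset.sum_sub_distrib]
    exact Finset.sum_congr rfl fun u _ => Finset.sum_congr rfl fun v _ => by ring
  rw [hsq, hswap, sub_neg_eq_add, ← two_mul]
  simp [dotProduct, lapl_mulVec_apply hdiag, Finset.mul_sum, mul_comm, mul_assoc]

theorem lapl_posSemidef (hsymm : ∀ u v, c u v = c v u) (hnonneg : ∀ u v, 0 ≤ c u v)
    (hdiag : ∀ v, c v v = 0) : (lapl c).PosSemidef := by
  refine .of_dotProduct_mulVec_nonneg (lapl_transpose hsymm) fun x => ?_
  have h := two_mul_dotProduct_lapl_mulVec hsymm hdiag x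
  have : 0 ≤ ∑ u, ∑ v, c u v * (x u - x v) ^ 2 :=
    Finset.sum_nonneg fun u _ => Finset.sum_nonneg fun v _ =>
      mul_nonneg (hnonneg u v) (sq_nonneg _)
  rw [star_trivial]
  linarith

end Laplacian

section Schur

variable {V : Type*} [Fintype V] [DecidableEq V]

omit [DecidableEq V] in
theorem mulVec_apply_eq_add_of_subtype (L : Matrix V V ℝ) (S : Set V) [Fintype S] (y : V → ℝ)
    (u : V) : (L *ᵥ y) u = ∑ j : S, L u j * y j + ∑ k : {v // v ∉ S}, L u k * y k := by
  convert (Fintype.sum_subtype_add_sum_subtype (· ∈ S) fun v => L u v * y v).symm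
  rfl

theorem schur_mulVec_of_harmonic (L : Matrix V V ℝ) (S : Set V) [Fintype S]
    (hA : IsUnit (Matrix.of fun i j : {v // v ∉ S} => L i.1 j.1).det) {y : V → ℝ}
    (hy : ∀ w ∉ S, (L *ᵥ y) w = 0) :
    schur L S *ᵥ (fun j : S => y j) = fun i : S => (L *ᵥ y) i := by
  set A := Matrix.of fun i j : {v // v ∉ S} => L i.1 j.1
  set B := Matrix.of fun (i : S) (j : {v // v ∉ S}) => L i.1 j.1
  set C := Matrix.of fun (i : {v // v ∉ S}) (j : S) => L i.1 j.1
  set ys : S → ℝ := fun j => y j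
  set yw : {v // v ∉ S} → ℝ := fun k => y k
  have hblock : A *ᵥ yw = -(C *ᵥ ys) := by
    ext w
    have : (C *ᵥ ys) w + (A *ᵥ yw) w = 0 :=
      (mulVec_apply_eq_add_of_subtype L S y w).symm.trans (hy w w.2)
    rw [Pi.neg_apply]
    linarith
  have hyw : yw = -(A⁻¹ *ᵥ (C *ᵥ ys)) := by
    rw [← mulVec_neg, ← hblock, mulVec_mulVec, nonsing_inv_mul _ hA, one_mulVec]
  ext i
  have e1 : (schur L S *ᵥ ys) i = (((Matrix.of fun i j : S => L i.1 j.1) - B * A⁻¹ * C) *ᵥ ys) i := rfl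
  have e2 : (L *ᵥ y) i = ((Matrix.of fun i j : S => L i.1 j.1) *ᵥ ys) i + (B *ᵥ yw) i :=
    mulVec_apply_eq_add_of_subtype L S y i
  rw [e1, e2, hyw, sub_mulVec, ← mulVec_mulVec, ← mulVec_mulVec, mulVec_neg, Pi.sub_apply, Pi.neg_apply,
    sub_eq_add_neg]

theorem schur_mulVec_const (L : Matrix V V ℝ) (S : Set V) [Fintype S]
    (hA : IsUnit (Matrix.of fun i j : {v // v ∉ S} => L i.1 j.1).det)
    (hL : L *ᵥ (fun _ => 1) = 0) : schur L S *ᵥ (fun _ => 1) = 0 := by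
  have := schur_mulVec_of_harmonic L S hA (y := fun _ => 1) fun w _ => by rw [hL]; rfl
  rw [this, hL]; rfl

theorem det_submatrix_compl_ne_zero {L : Matrix V V ℝ} (hL : L.PosSemidef) (hconn : LapConnected L)
    {S : Set V} (hS : S.Nonempty) : (Matrix.of fun i j : {v // v ∉ S} => L i.1 j.1).det ≠ 0 := by
  intro h0
  obtain ⟨v, hv, hAv⟩ := exists_mulVec_eq_zero_iff.2 h0
  set x : V → ℝ := fun u => if h : u ∈ S then 0 else v ⟨u, h⟩
  have hxS : ∀ s : S, x s = 0 := fun s => dif_pos s.2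
  have hxW : ∀ w : {v // v ∉ S}, x w = v w := fun w => dif_neg w.2
  have hLx : ∀ w : {v // v ∉ S}, (L *ᵥ x) w = 0 := by
    intro w
    rw [mulVec_apply_eq_add_of_subtype L S x w]
    simp only [hxS, hxW, mul_zero, Finset.sum_const_zero, zero_add]
    exact congrFun hAv w
  have hquad : star x ⬝ᵥ (L *ᵥ x) = 0 := by
    refine Finset.sum_eq_zero fun u _ => ?_
    by_cases hu : u ∈ S
    · simp [hxS ⟨u, hu⟩]
    · simp [hLx ⟨u, hu⟩]
  obtain ⟨k, hk⟩ := hconn x ((hL.dotProduct_mulVec_zero_iff x).1 hquad)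
  obtain ⟨s, hs⟩ := hS
  refine hv (funext fun w => ?_)
  rw [← hxW, hk w, ← hk s, hxS ⟨s, hs⟩]
  rfl

end Schur

theorem sum_ite_mulVec_ite {ι : Type*} [Fintype ι] (N : Matrix ι ι ℝ)
    (hN : N *ᵥ (fun _ => 1) = 0) (P : ι → Prop) [DecidablePred P] (p q : ℝ) :
    ∑ i, (if P i then (N *ᵥ fun j => if P j then p else q) i else 0)
      = (p - q) * ∑ i, ∑ j, if P i ∧ ¬P j then -N i j else 0 := by
  have hy : (fun j => if P j then p else q)
      = p • (fun _ => (1 : ℝ)) - (p - q) • fun j => if P j then 0 else 1 := by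
    ext j; by_cases hj : P j <;> simp [hj]
  rw [hy, mulVec_sub, mulVec_smul, mulVec_smul, hN, Finset.mul_sum]
  refine Finset.sum_congr rfl fun i _ => ?_
  split_ifs with hi
  · simp [mulVec, dotProduct, hi, Finset.mul_sum, ← Finset.sum_neg_distrib, neg_ite]
  · simp [hi]

theorem IsMPInv.mulVec_mulVec_of_orthogonal_ker {n : Type*} [Fintype n] {A B : Matrix n n ℝ}
    (h : IsMPInv A B) (hA : Aᵀ = A) {b : n → ℝ} (hb : ∀ z, A *ᵥ z = 0 → b ⬝ᵥ z = 0) :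
    A *ᵥ (B *ᵥ b) = b := by
  have hAAB : A * A * B = A :=
    calc A * A * B = A * (A * B)ᵀ := by rw [h.2.2.1, Matrix.mul_assoc]
      _ = (A * B * A)ᵀ := by simp only [transpose_mul, hA, Matrix.mul_assoc]
      _ = A := by rw [h.1, hA]
  set z := b - A *ᵥ (B *ᵥ b)
  have hz : A *ᵥ z = 0 := by
    rw [mulVec_sub, mulVec_mulVec, mulVec_mulVec, hAAB, sub_self]
  have hzz : z ⬝ᵥ z = 0 := by
    calc z ⬝ᵥ z = b ⬝ᵥ z - (B *ᵥ b) ⬝ᵥ (Aᵀ *ᵥ z) := by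
          rw [sub_dotProduct, mulVec_transpose, dotProduct_comm _ (z ᵥ* A), ← dotProduct_mulVec,
            dotProduct_comm z]
      _ = 0 := by rw [hA, hz, dotProduct_zero, hb z hz, sub_zero]
  exact (sub_eq_zero.1 (dotProduct_self_eq_zero.1 hzz)).symm

section MapMatrix

variable {V W : Type*} [DecidableEq W]

def mapMatrix (π : V → W) : Matrix W V ℝ := Matrix.of fun a u => if π u = a then 1 else 0

theorem mapMatrix_transpose_mulVec [Fintype W] (π : V → W) (z : W → ℝ) :
    (mapMatrix π)ᵀ *ᵥ z = z ∘ π := by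
  ext u; simp [mapMatrix, mulVec, dotProduct]

theorem mapMatrix_mulVec_apply [Fintype V] (π : V → W) (v : V → ℝ) (a : W) :
    (mapMatrix π *ᵥ v) a = ∑ u, if π u = a then v u else 0 := by
  simp [mapMatrix, mulVec, dotProduct]

theorem LapConnected.mapMatrix_mul_mul_transpose [Fintype V] [Fintype W] {L : Matrix V V ℝ}
    (hL : L.PosSemidef) (hconn : LapConnected L) {π : V → W} (hπ : Function.Surjective π) :
    LapConnected (mapMatrix π * L * (mapMatrix π)ᵀ) := by
  intro z hz
  have hquad : star (z ∘ π) ⬝ᵥ (L *ᵥ (z ∘ π)) = 0 := by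
    rw [star_trivial, ← mapMatrix_transpose_mulVec, mulVec_transpose, ← dotProduct_mulVec,
      ← mulVec_transpose, mulVec_mulVec, mulVec_mulVec, hz, dotProduct_zero]
  obtain ⟨k, hk⟩ := hconn _ ((hL.dotProduct_mulVec_zero_iff _).1 hquad)
  refine ⟨k, fun a => ?_⟩
  obtain ⟨u, rfl⟩ := hπ a
  exact hk u

end MapMatrix

section Contraction

variable {V : Type*} {C D : Set V}

theorem contractMap_of_mem_left {u : V} (h : u ∈ C) : contractMap C D u = Sum.inr false :=
  dif_pos h

theorem contractMap_of_mem_union {u : V} (h : u ∈ C ∪ D) :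
    contractMap C D u = if u ∈ C then Sum.inr false else Sum.inr true := by
  by_cases hC : u ∈ C
  · simp [contractMap, hC]
  · simp [contractMap, hC, h.resolve_left hC]

theorem contractMap_of_notMem {u : V} (h : u ∉ C ∪ D) : contractMap C D u = Sum.inl ⟨u, h⟩ := by
  rw [Set.mem_union, not_or] at h
  simp [contractMap, h.1, h.2]

theorem contractMap_eq_inl_iff {u : V} {w : {v // v ∉ C ∪ D}} :
    contractMap C D u = Sum.inl w ↔ u = w := by
  by_cases hu : u ∈ C ∪ D
  · have : u ≠ w := fun h => w.2 (h ▸ hu)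
    rw [contractMap_of_mem_union hu]
    split_ifs <;> simp [this]
  · simp [contractMap_of_notMem hu, Subtype.ext_iff]

theorem contractMap_eq_inr_false_iff {u : V} : contractMap C D u = Sum.inr false ↔ u ∈ C := by
  unfold contractMap
  split_ifs <;> simp [*]

theorem contractMap_surjective (hd : Disjoint C D) (hC : C.Nonempty) (hD : D.Nonempty) :
    Function.Surjective (contractMap C D) := by
  rintro (w | _ | _)
  · exact ⟨w, contractMap_of_notMem w.2⟩
  · obtain ⟨u, hu⟩ := hC
    exact ⟨u, contractMap_of_mem_left hu⟩
  · obtain ⟨u, hu⟩ := hD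
    exact ⟨u, by simp [contractMap, hu, Set.disjoint_right.1 hd hu]⟩

variable [Fintype V] [DecidableEq V]

theorem contractLapl_eq_mapMatrix (c : V → V → ℝ) :
    contractLapl c C D
      = mapMatrix (contractMap C D) * lapl c * (mapMatrix (contractMap C D))ᵀ := rfl

theorem contractLapl_transpose {c : V → V → ℝ} (hsymm : ∀ u v, c u v = c v u) :
    (contractLapl c C D)ᵀ = contractLapl c C D := by
  rw [contractLapl_eq_mapMatrix, transpose_mul, transpose_mul, transpose_transpose,
    lapl_transpose hsymm, Matrix.mul_assoc]

theorem lapConnected_contractLapl {c : V → V → ℝ} (hL : (lapl c).PosSemidef)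
    (hconn : LapConnected (lapl c)) (hd : Disjoint C D) (hC : C.Nonempty) (hD : D.Nonempty) :
    LapConnected (contractLapl c C D) := by
  rw [contractLapl_eq_mapMatrix]
  exact LapConnected.mapMatrix_mul_mul_transpose hL hconn (contractMap_surjective hd hC hD)

theorem contractLapl_mulVec_apply (c : V → V → ℝ) (x : ({v // v ∉ C ∪ D}) ⊕ Bool → ℝ) (a) :
    (contractLapl c C D *ᵥ x) a
      = ∑ u, if contractMap C D u = a then (lapl c *ᵥ (x ∘ contractMap C D)) u else 0 := by
  rw [contractLapl_eq_mapMatrix, ← mulVec_mulVec, ← mulVec_mulVec, mapMatrix_transpose_mulVec,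
    mapMatrix_mulVec_apply]

theorem contractLapl_mulVec_inl (c : V → V → ℝ) (x : ({v // v ∉ C ∪ D}) ⊕ Bool → ℝ)
    (w : {v // v ∉ C ∪ D}) :
    (contractLapl c C D *ᵥ x) (Sum.inl w) = (lapl c *ᵥ (x ∘ contractMap C D)) w := by
  simp [contractLapl_mulVec_apply, contractMap_eq_inl_iff]

theorem contractLapl_mulVec_inr_false (c : V → V → ℝ) (x : ({v // v ∉ C ∪ D}) ⊕ Bool → ℝ) :
    (contractLapl c C D *ᵥ x) (Sum.inr false)
      = ∑ i : ↥(C ∪ D), if i.1 ∈ C then (lapl c *ᵥ (x ∘ contractMap C D)) i else 0 := by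
  rw [contractLapl_mulVec_apply, ← Fintype.sum_subtype_add_sum_subtype (· ∈ C ∪ D)]
  simp only [contractMap_eq_inr_false_iff]
  rw [Finset.sum_eq_zero (s := Finset.univ (α := {v // v ∉ C ∪ D}))
    fun w _ => if_neg fun h => w.2 (Or.inl h), add_zero]
  congr
  exact Subsingleton.elim _ _

end Contraction


/-- The total weight of edges between `C` and `D` in the Schur complement of `G`
onto `C ∪ D` equals the reciprocal of the effective resistance between the two
contracted vertices of `G/(C,D)`. -/
theorem schur_weight_eq_inv_reff {V : Type*} [Fintype V] [DecidableEq V]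
    (c : V → V → ℝ) (hsymm : ∀ u v, c u v = c v u) (hnonneg : ∀ u v, 0 ≤ c u v)
    (hdiag : ∀ v, c v v = 0) (hconn : LapConnected (lapl c))
    (C D : Set V) (hd : Disjoint C D) (hC : C.Nonempty) (hD : D.Nonempty)
    (M : Matrix (({v : V // v ∉ C ∪ D}) ⊕ Bool) (({v : V // v ∉ C ∪ D}) ⊕ Bool) ℝ)
    (hM : IsMPInv (contractLapl c C D) M)
    (chi : ({v : V // v ∉ C ∪ D}) ⊕ Bool → ℝ)
    (hchi : chi = fun a => (if a = Sum.inr false then (1 : ℝ) else 0) -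
        if a = Sum.inr true then 1 else 0) :
    (∑ i : ↥(C ∪ D), ∑ j : ↥(C ∪ D),
        if i.1 ∈ C ∧ j.1 ∈ D then -(schur (lapl c) (C ∪ D) i j) else 0)
      = (chi ⬝ᵥ (M *ᵥ chi))⁻¹ := by
  have hL := lapl_posSemidef hsymm hnonneg hdiag
  have hA := (det_submatrix_compl_ne_zero hL hconn (S := C ∪ D) hC.inl).isUnit
  have hKx : contractLapl c C D *ᵥ (M *ᵥ chi) = chi := by
    refine hM.mulVec_mulVec_of_orthogonal_ker (contractLapl_transpose hsymm) fun z hz => ?_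
    obtain ⟨k, hk⟩ := lapConnected_contractLapl hL hconn hd hC hD z hz
    simp [hchi, hk, dotProduct, Fintype.sum_sum_type]
  set x := M *ᵥ chi
  have hharm : ∀ w ∉ C ∪ D, (lapl c *ᵥ (x ∘ contractMap C D)) w = 0 := fun w hw => by
    rw [← contractLapl_mulVec_inl c x ⟨w, hw⟩, hKx, hchi]; simp
  have hflow : ∑ i : ↥(C ∪ D), (if i.1 ∈ C then (lapl c *ᵥ (x ∘ contractMap C D)) i else 0) = 1 := by
    rw [← contractLapl_mulVec_inr_false, hKx, hchi]; simp
  have hpot : (fun j : ↥(C ∪ D) => (x ∘ contractMap C D) j)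
      = fun j => if j.1 ∈ C then x (Sum.inr false) else x (Sum.inr true) := by
    ext j; simp [contractMap_of_mem_union j.2, apply_ite x]
  have key := sum_ite_mulVec_ite _ (schur_mulVec_const _ _ hA (lapl_mulVec_const hdiag 1))
    (fun i : ↥(C ∪ D) => i.1 ∈ C) (x (Sum.inr false)) (x (Sum.inr true))
  rw [← hpot, schur_mulVec_of_harmonic _ _ hA hharm, hflow] at key
  have hchix : chi ⬝ᵥ x = x (Sum.inr false) - x (Sum.inr true) := by
    simp [hchi, dotProduct, Fintype.sum_sum_type, sub_eq_neg_add]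
  have hmemD : ∀ j : ↥(C ∪ D), j.1 ∈ D ↔ j.1 ∉ C :=
    fun j => ⟨fun h => Set.disjoint_right.1 hd h, j.2.resolve_left⟩
  simp only [hmemD, hchix]
  exact eq_inv_of_mul_eq_one_left (by rw [mul_comm]; exact key.symm)
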